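/- Let d be a natural number, let p : ℝ → ℝ be a polynomial of degree at most d, and let f : ℝ → ℝ be a locally integrable function such that f(t) ≤ p(t) for all t ∈ ℝ, and suppose there exists C > 0 with |∫_{−T}^{T} f(t) dt| ≤ C T^{d+1} for all T ≥ 1. Then for every λ₀ > 0 there exists C″ > 0 such that for all h ∈ (0, 1], h^d ∫_{−λ₀}^{λ₀} |f(λ/h)| dλ ≤ C″. -/
import Mathlib


open MeasureTheory Set intervalIntegral

/-- If `f` is locally integrable, dominated pointwise by a polynomial `p`
of degree at most `d`, and `|∫_{-T}^{T} f| ≤ C T^{d+1}` for all `T ≥ 1`, then for every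
`λ₀ > 0` there is `C'' > 0` such that `h^d ∫_{-λ₀}^{λ₀} |f(λ/h)| dλ ≤ C''` for all
`h ∈ (0,1]`. -/
theorem stmt_4 (d : ℕ) (p : Polynomial ℝ) (hdeg : p.natDegree ≤ d)
    (f : ℝ → ℝ) (hloc : MeasureTheory.LocallyIntegrable f MeasureTheory.volume)
    (hle : ∀ t : ℝ, f t ≤ p.eval t)
    (C : ℝ) (hC : 0 < C)
    (hbound : ∀ T : ℝ, 1 ≤ T → |∫ t in (-T)..T, f t| ≤ C * T ^ (d + 1)) :
    ∀ lam₀ : ℝ, 0 < lam₀ → ∃ C'' : ℝ, 0 < C'' ∧ ∀ h ∈ Set.Ioc (0 : ℝ) 1,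
      h ^ d * ∫ lam in (-lam₀)..lam₀, |f (lam / h)| ≤ C'' := by
  intro lam₀ hlam₀
  set M : ℝ := ∑ i ∈ Finset.range (d + 1), |p.coeff i| with hM
  have hM0 : 0 ≤ M := Finset.sum_nonneg fun i _ => abs_nonneg _
  -- pointwise polynomial bound
  have hpoly : ∀ T : ℝ, 1 ≤ T → ∀ t : ℝ, |t| ≤ T → |p.eval t| ≤ M * T ^ d := by
    intro T hT t ht
    rw [Polynomial.eval_eq_sum_range' (lt_of_le_of_lt hdeg (Nat.lt_succ_self d))]
    calc |∑ i ∈ Finset.range (d + 1), p.coeff i * t ^ i|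
        ≤ ∑ i ∈ Finset.range (d + 1), |p.coeff i * t ^ i| :=
          Finset.abs_sum_le_sum_abs _ _
      _ ≤ ∑ i ∈ Finset.range (d + 1), |p.coeff i| * T ^ d := by
          refine Finset.sum_le_sum fun i hi => ?_
          rw [abs_mul]
          refine mul_le_mul_of_nonneg_left ?_ (abs_nonneg _)
          calc |t ^ i| = |t| ^ i := abs_pow t i
            _ ≤ T ^ i := pow_le_pow_left₀ (abs_nonneg t) ht i
            _ ≤ T ^ d := pow_le_pow_right₀ hT (Nat.lt_succ_iff.mp (Finset.mem_range.mp hi))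
      _ = M * T ^ d := by rw [hM, Finset.sum_mul]
  -- integrability facts
  have hfi : ∀ a b : ℝ, IntervalIntegrable f volume a b := by
    intro a b
    rw [intervalIntegrable_iff]
    exact (hloc.integrableOn_isCompact isCompact_uIcc).mono_set Set.uIoc_subset_uIcc
  have hpi : ∀ a b : ℝ, IntervalIntegrable (fun t => p.eval t) volume a b :=
    fun a b => p.continuous.intervalIntegrable a b
  refine ⟨(4 * M + C) * max lam₀ 1 ^ (d + 1), ?_, ?_⟩
  · have h1 : (0:ℝ) < 4 * M + C := by linarith
    have h2 : (0:ℝ) < max lam₀ 1 ^ (d + 1) :=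
      pow_pos (lt_of_lt_of_le one_pos (le_max_right _ _)) _
    exact mul_pos h1 h2
  intro h hh
  obtain ⟨hh0, hh1⟩ := hh
  set T : ℝ := lam₀ / h with hTdef
  have hT0 : 0 < T := div_pos hlam₀ hh0
  set T' : ℝ := max T 1 with hT'def
  have hT'1 : (1:ℝ) ≤ T' := le_max_right _ _
  have hT'0 : (0:ℝ) < T' := lt_of_lt_of_le one_pos hT'1
  -- change of variables
  have hcov : (∫ lam in (-lam₀)..lam₀, |f (lam / h)|) = h * ∫ t in (-T)..T, |f t| := by
    have := intervalIntegral.integral_comp_div (a := -lam₀) (b := lam₀)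
      (fun t => |f t|) (ne_of_gt hh0)
    rw [this, neg_div, smul_eq_mul, hTdef]
  -- bound for T ≥ 1 interval
  have habsint : ∫ t in (-T')..T', |p.eval t| ≤ 2 * M * T' ^ (d + 1) := by
    have hle' : ∀ x ∈ Set.Icc (-T') T', |p.eval x| ≤ M * T' ^ d := by
      intro x hx
      exact hpoly T' hT'1 x (abs_le.mpr ⟨hx.1, hx.2⟩)
    calc ∫ t in (-T')..T', |p.eval t|
        ≤ ∫ _ in (-T')..T', M * T' ^ d :=
          intervalIntegral.integral_mono_on (by linarith) ((hpi _ _).abs)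
            intervalIntegrable_const hle'
      _ = (T' - -T') * (M * T' ^ d) := by
          rw [intervalIntegral.integral_const, smul_eq_mul]
      _ = 2 * M * T' ^ (d + 1) := by ring
  -- main integral bound on [-T', T']
  have hmain : ∫ t in (-T')..T', |f t| ≤ (4 * M + C) * T' ^ (d + 1) := by
    have hptw : ∀ x ∈ Set.Icc (-T') T', |f x| ≤ (p.eval x - f x) + |p.eval x| := by
      intro x _
      have h1 : |f x| ≤ |p.eval x - f x| + |p.eval x| := by
        have := abs_sub_abs_le_abs_sub (f x) (p.eval x)
        calc |f x| = |p.eval x - (p.eval x - f x)| := by ring_nf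
          _ ≤ |p.eval x| + |p.eval x - f x| := abs_sub _ _
          _ = |p.eval x - f x| + |p.eval x| := by ring
      rwa [abs_of_nonneg (show (0:ℝ) ≤ p.eval x - f x by linarith [hle x])] at h1
    have h2 : ∫ t in (-T')..T', |f t| ≤
        ∫ t in (-T')..T', ((p.eval t - f t) + |p.eval t|) :=
      intervalIntegral.integral_mono_on (by linarith) (hfi _ _).abs
        (((hpi _ _).sub (hfi _ _)).add (hpi _ _).abs) hptw
    have h3 : (∫ t in (-T')..T', ((p.eval t - f t) + |p.eval t|)) =
        (∫ t in (-T')..T', p.eval t) - (∫ t in (-T')..T', f t)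
          + ∫ t in (-T')..T', |p.eval t| := by
      rw [intervalIntegral.integral_add ((hpi _ _).sub (hfi _ _)) (hpi _ _).abs,
        intervalIntegral.integral_sub (hpi _ _) (hfi _ _)]
    have h4 : (∫ t in (-T')..T', p.eval t) ≤ 2 * M * T' ^ (d + 1) :=
      le_trans (le_trans (le_abs_self _)
        (intervalIntegral.abs_integral_le_integral_abs (by linarith))) habsint
    have h5 : -(∫ t in (-T')..T', f t) ≤ C * T' ^ (d + 1) :=
      le_trans (neg_le_abs _) (hbound T' hT'1)
    calc ∫ t in (-T')..T', |f t|
        ≤ (∫ t in (-T')..T', p.eval t) - (∫ t in (-T')..T', f t)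
          + ∫ t in (-T')..T', |p.eval t| := by rw [← h3]; exact h2
      _ ≤ 2 * M * T' ^ (d + 1) + C * T' ^ (d + 1) + 2 * M * T' ^ (d + 1) := by
          linarith
      _ = (4 * M + C) * T' ^ (d + 1) := by ring
  -- monotonicity of the integral of |f|
  have hmono : ∫ t in (-T)..T, |f t| ≤ ∫ t in (-T')..T', |f t| := by
    refine intervalIntegral.integral_mono_interval (neg_le_neg (le_max_left _ _))
      (by linarith) (le_max_left _ _) ?_ (hfi _ _).abs
    filter_upwards with x using abs_nonneg _
  -- put it together
  have hInonneg : 0 ≤ ∫ t in (-T)..T, |f t| :=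
    intervalIntegral.integral_nonneg (by linarith) fun x _ => abs_nonneg _
  have hhT' : h * T' ≤ max lam₀ 1 := by
    rw [hT'def, mul_max_of_nonneg _ _ (le_of_lt hh0), mul_one,
      hTdef, mul_div_cancel₀ _ (ne_of_gt hh0)]
    exact max_le_max le_rfl hh1
  calc h ^ d * ∫ lam in (-lam₀)..lam₀, |f (lam / h)|
      = h ^ (d + 1) * ∫ t in (-T)..T, |f t| := by rw [hcov]; ring
    _ ≤ h ^ (d + 1) * ((4 * M + C) * T' ^ (d + 1)) := by
        refine mul_le_mul_of_nonneg_left (le_trans hmono hmain)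
          (pow_nonneg (le_of_lt hh0) _)
    _ = (4 * M + C) * (h * T') ^ (d + 1) := by rw [mul_pow]; ring
    _ ≤ (4 * M + C) * max lam₀ 1 ^ (d + 1) := by
        refine mul_le_mul_of_nonneg_left
          (pow_le_pow_left₀ (by positivity) hhT' _) (by linarith)
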